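/- Let G be a locally compact second countable unimodular group, A a closed unimodular subgroup, λ, λ_A their Haar measures, and λ_Q the invariant measure on G/A with the standard Weil disintegration. Let B ⊆ G be compact and let (F_n) be a sequence of measurable symmetric subsets of A with 0 < λ_A(F_n) < ∞ which are ((B⁻¹B ∩ A), ε_n)-invariant with ε_n → 0, meaning λ_A((B⁻¹B ∩ A)F_n) ≤ (1 + ε_n)λ_A(F_n). Then λ(BF_n)/λ_A(F_n) → λ_Q(BA) as n → ∞. -/

import Mathlib

/-!
For `b ∈ B` the fiber of `BFₙ` over the coset `bA` contains `bFₙ`, so the Weil formula gives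
`λ_A(Fₙ) λ_Q(BA) ≤ λ(BFₙ)`. Conversely, if `β(q)` is a point of `closure B` in the coset `q`,
chosen measurably in `q`, then `BFₙ` lies in the measurable set of those `x` over `BA` with
`β(xA)⁻¹x ∈ (B⁻¹B ∩ A)Fₙ` (up to inseparable points), whose fibers have `λ_A`-measure at most
`(1 + εₙ)λ_A(Fₙ)`. The section `β` comes from a Cantor scheme: cover `G` by countably many
closed translates of ever smaller neighbourhoods of `1`, and follow, for each coset, the
least-indexed cells that still meet it; the nested compact cells have a common point on the coset.
-/

open MeasureTheory ENNReal Filter Pointwise Topology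

theorem measurableSet_setOf_apply_of_countable {Y α : Type*} [MeasurableSpace Y] [Countable α]
    {f : Y → α} (hf : ∀ a, MeasurableSet {y | f y = a}) {p : α → Y → Prop}
    (hp : ∀ a, MeasurableSet {y | p a y}) : MeasurableSet {y | p (f y) y} := by
  have : {y | p (f y) y} = ⋃ a, {y | f y = a} ∩ {y | p a y} := by
    ext y; simp
  rw [this]
  exact .iUnion fun a => (hf a).inter (hp a)

namespace CantorScheme

variable {X Y : Type*} (C : Set X) (P : ℕ → ℕ → Set X) (S : Y → Set X)

/-- The cell of the scheme addressed by a word; words are read right to left, so the letter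
`j` prepended to a word of length `k` selects the piece `P k j`. -/
def cell : List ℕ → Set X
  | [] => C
  | j :: w => cell w ∩ P w.length j

/-- The second disjunct makes `next` total: it is `0` when no child cell meets `S y`. -/
def IsNextIndex (w : List ℕ) (y : Y) (j : ℕ) : Prop :=
  (cell C P (j :: w) ∩ S y).Nonempty ∨ ∀ i, ¬(cell C P (i :: w) ∩ S y).Nonempty

theorem exists_isNextIndex (w : List ℕ) (y : Y) : ∃ j, IsNextIndex C P S w y j := by
  by_cases h : ∃ i, (cell C P (i :: w) ∩ S y).Nonempty
  · exact h.imp fun _ => Or.inl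
  · exact ⟨0, Or.inr (not_exists.1 h)⟩

open Classical in
noncomputable def next (w : List ℕ) (y : Y) : ℕ :=
  Nat.find (exists_isNextIndex C P S w y)

noncomputable def word (y : Y) : ℕ → List ℕ
  | 0 => []
  | k + 1 => next C P S (word y k) y :: word y k

open Classical in
noncomputable def selection [Nonempty X] (y : Y) : X :=
  if h : (⋂ k, cell C P (word C P S y k) ∩ S y).Nonempty then h.some
  else Classical.arbitrary X

variable {C P S}

theorem length_word (y : Y) (k : ℕ) : (word C P S y k).length = k := by
  induction k with
  | zero => rfl
  | succ k ih => simp [word, ih]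

theorem cell_word_succ (y : Y) (k : ℕ) :
    cell C P (word C P S y (k + 1)) =
      cell C P (word C P S y k) ∩ P k (next C P S (word C P S y k) y) := by
  simp [word, cell, length_word]

theorem cell_subset (w : List ℕ) : cell C P w ⊆ C := by
  induction w with
  | nil => exact subset_rfl
  | cons j w ih => exact Set.inter_subset_left.trans ih

theorem isClosed_cell [TopologicalSpace X] (hC : IsClosed C) (hP : ∀ k j, IsClosed (P k j))
    (w : List ℕ) : IsClosed (cell C P w) := by
  induction w with
  | nil => exact hC
  | cons j w ih => exact ih.inter (hP _ _)

theorem cell_next_inter_nonempty (hcover : ∀ k, C ⊆ ⋃ j, P k j) {w : List ℕ} {y : Y}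
    (h : (cell C P w ∩ S y).Nonempty) : (cell C P (next C P S w y :: w) ∩ S y).Nonempty := by
  classical
  obtain ⟨x, hxw, hxS⟩ := h
  obtain ⟨j, hj⟩ := Set.mem_iUnion.1 (hcover w.length (cell_subset w hxw))
  have hspec := Nat.find_spec (exists_isNextIndex C P S w y)
  exact hspec.resolve_right fun hnone => hnone j ⟨x, ⟨hxw, hj⟩, hxS⟩

theorem cell_word_inter_nonempty (hcover : ∀ k, C ⊆ ⋃ j, P k j) {y : Y}
    (h : (C ∩ S y).Nonempty) (k : ℕ) : (cell C P (word C P S y k) ∩ S y).Nonempty := by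
  induction k with
  | zero => exact h
  | succ k ih => exact cell_next_inter_nonempty hcover ih

theorem measurableSet_next_eq [MeasurableSpace Y]
    (hhit : ∀ w, MeasurableSet {y | (cell C P w ∩ S y).Nonempty}) (w : List ℕ) (j : ℕ) :
    MeasurableSet {y | next C P S w y = j} := by
  classical
  refine measurable_find (exists_isNextIndex C P S w ·) (fun i => ?_)
    (measurableSet_singleton j)
  simp only [IsNextIndex, Set.ofPred_or, Set.ofPred_forall, ← Set.compl_ofPred]
  exact (hhit _).union (.iInter fun i => (hhit _).compl)

theorem measurableSet_word_eq [MeasurableSpace Y]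
    (hhit : ∀ w, MeasurableSet {y | (cell C P w ∩ S y).Nonempty}) (k : ℕ) (w : List ℕ) :
    MeasurableSet {y | word C P S y k = w} := by
  induction k generalizing w with
  | zero => by_cases h : [] = w <;> simp [word, h]
  | succ k ih =>
    cases w with
    | nil => simp [word]
    | cons j w =>
      have : {y | word C P S y (k + 1) = j :: w} =
          {y | next C P S w y = j} ∩ {y | word C P S y k = w} := by
        ext y
        simp only [word, List.cons.injEq, Set.mem_ofPred_eq, Set.mem_inter_iff]
        exact ⟨fun ⟨h₁, h₂⟩ => ⟨h₂ ▸ h₁, h₂⟩, fun ⟨h₁, h₂⟩ => ⟨h₂ ▸ h₁, h₂⟩⟩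
      rw [this]
      exact (measurableSet_next_eq hhit w j).inter (ih w)

section Selection

variable [TopologicalSpace X]

theorem iInter_cell_word_inter_nonempty (hC : IsCompact C) (hCc : IsClosed C)
    (hP : ∀ k j, IsClosed (P k j)) (hcover : ∀ k, C ⊆ ⋃ j, P k j) (hS : ∀ y, IsClosed (S y))
    {y : Y} (h : (C ∩ S y).Nonempty) : (⋂ k, cell C P (word C P S y k) ∩ S y).Nonempty :=
  IsCompact.nonempty_iInter_of_sequence_nonempty_isCompact_isClosed _
    (fun k => by rw [cell_word_succ]; exact Set.inter_subset_inter_left _ Set.inter_subset_left)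
    (cell_word_inter_nonempty hcover h) (hC.inter_right (hS y))
    (fun k => (isClosed_cell hCc hP _).inter (hS y))

theorem selection_mem [Nonempty X] (hC : IsCompact C) (hCc : IsClosed C)
    (hP : ∀ k j, IsClosed (P k j)) (hcover : ∀ k, C ⊆ ⋃ j, P k j) (hS : ∀ y, IsClosed (S y)) {y : Y}
    (h : (C ∩ S y).Nonempty) : selection C P S y ∈ ⋂ k, cell C P (word C P S y k) ∩ S y := by
  have hne := iInter_cell_word_inter_nonempty hC hCc hP hcover hS h
  rw [selection, dif_pos hne]
  exact hne.some_mem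

theorem measurable_selection [Nonempty X] [MeasurableSpace Y] [MeasurableSpace X]
    [BorelSpace X]
    (hC : IsCompact C) (hCc : IsClosed C) (hP : ∀ k j, IsClosed (P k j))
    (hcover : ∀ k, C ⊆ ⋃ j, P k j)
    (hsmall : ∀ x U, IsOpen U → x ∈ U → ∃ k, ∀ j, x ∈ P k j → P k j ⊆ U)
    (hS : ∀ y, IsClosed (S y)) (hhit : ∀ w, MeasurableSet {y | (cell C P w ∩ S y).Nonempty}) :
    Measurable (selection C P S) := by
  refine measurable_of_isOpen fun U hU => ?_
  have hpre : selection C P S ⁻¹' U =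
      ({y | (C ∩ S y).Nonempty} ∩ ⋃ k, {y | cell C P (word C P S y (k + 1)) ⊆ U}) ∪
        ({y | (C ∩ S y).Nonempty}ᶜ ∩ {_y | Classical.arbitrary X ∈ U}) := by
    ext y
    by_cases h : (C ∩ S y).Nonempty
    · have hmem := Set.mem_iInter.1 (selection_mem hC hCc hP hcover hS h)
      suffices selection C P S y ∈ U ↔ ∃ k, cell C P (word C P S y (k + 1)) ⊆ U by simpa [h]
      refine ⟨fun hyU => ?_, fun ⟨k, hk⟩ => hk (hmem (k + 1)).1⟩
      obtain ⟨k, hk⟩ := hsmall _ U hU hyU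
      refine ⟨k, ?_⟩
      have hsel := (hmem (k + 1)).1
      rw [cell_word_succ] at hsel ⊢
      exact Set.inter_subset_right.trans (hk _ hsel.2)
    · have hne : ¬(⋂ k, cell C P (word C P S y k) ∩ S y).Nonempty := fun hne =>
        h ⟨hne.some, Set.mem_iInter.1 hne.some_mem 0⟩
      simp [h, selection, dif_neg hne]
  rw [hpre]
  refine .union ((hhit []).inter (.iUnion fun k => ?_)) ((hhit []).compl.inter (.const _))
  exact measurableSet_setOf_apply_of_countable (p := fun w _ => cell C P w ⊆ U)
    (measurableSet_word_eq hhit (k + 1)) fun _ => .const _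

end Selection

end CantorScheme

open CantorScheme in
theorem exists_measurable_selection {X Y : Type*} [TopologicalSpace X] [MeasurableSpace X]
    [BorelSpace X] [Nonempty X] [MeasurableSpace Y] {C : Set X} {S : Y → Set X}
    (hC : IsCompact C) (hCc : IsClosed C) (P : ℕ → ℕ → Set X) (hP : ∀ k j, IsClosed (P k j))
    (hcover : ∀ k, C ⊆ ⋃ j, P k j)
    (hsmall : ∀ x U, IsOpen U → x ∈ U → ∃ k, ∀ j, x ∈ P k j → P k j ⊆ U)
    (hS : ∀ y, IsClosed (S y))
    (hhit : ∀ K, IsCompact K → IsClosed K → MeasurableSet {y | (K ∩ S y).Nonempty}) :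
    ∃ β : Y → X, Measurable β ∧ ∀ y, (C ∩ S y).Nonempty → β y ∈ C ∩ S y := by
  have hcell : ∀ w, MeasurableSet {y | (cell C P w ∩ S y).Nonempty} := fun w =>
    hhit _ (hC.of_isClosed_subset (isClosed_cell hCc hP w) (cell_subset w))
      (isClosed_cell hCc hP w)
  refine ⟨selection C P S, measurable_selection hC hCc hP hcover hsmall hS hcell,
    fun y h => ?_⟩
  exact Set.mem_iInter.1 (selection_mem hC hCc hP hcover hS h) 0

section TopologicalGroup

variable {G : Type*} [Group G] [TopologicalSpace G] [IsTopologicalGroup G]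

theorem exists_isClosed_cover_inv_mul_mem [SecondCountableTopology G] {V : Set G}
    (hV : V ∈ 𝓝 1) : ∃ P : ℕ → Set G, (∀ j, IsClosed (P j)) ∧ ⋃ j, P j = Set.univ ∧
      ∀ j, ∀ x ∈ P j, ∀ y ∈ P j, x⁻¹ * y ∈ V := by
  obtain ⟨D, hD1, hDc, hDinv, hDD⟩ := exists_closed_nhds_one_inv_eq_mul_subset hV
  obtain ⟨s, hsc, hsU⟩ := TopologicalSpace.countable_cover_nhds (f := fun x : G => x • D)
    fun x => smul_mem_nhds_self.2 hD1
  have hsne : s.Nonempty := by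
    obtain ⟨x, hx, -⟩ := Set.mem_iUnion₂.1 (hsU.symm ▸ Set.mem_univ (1 : G))
    exact ⟨x, hx⟩
  obtain ⟨g, rfl⟩ := hsc.exists_eq_range hsne
  refine ⟨fun j => g j • D, fun j => hDc.smul _, by simpa using hsU, ?_⟩
  rintro j _ ⟨d₁, hd₁, rfl⟩ _ ⟨d₂, hd₂, rfl⟩
  have : d₁⁻¹ * d₂ ∈ D⁻¹ * D := Set.mul_mem_mul (Set.inv_mem_inv.2 hd₁) hd₂
  rw [hDinv] at this
  simpa [smul_eq_mul, mul_assoc] using hDD this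

theorem exists_isClosed_covers_small [SecondCountableTopology G] :
    ∃ P : ℕ → ℕ → Set G, (∀ k j, IsClosed (P k j)) ∧ (∀ k, ⋃ j, P k j = Set.univ) ∧
      ∀ x U, IsOpen U → x ∈ U → ∃ k, ∀ j, x ∈ P k j → P k j ⊆ U := by
  obtain ⟨e, he⟩ := (𝓝 (1 : G)).exists_antitone_basis
  choose P hPc hPcover hPsmall using fun k => exists_isClosed_cover_inv_mul_mem (he.mem k)
  refine ⟨P, hPc, hPcover, fun x U hU hx => ?_⟩
  have hU1 : (x * ·) ⁻¹' U ∈ 𝓝 (1 : G) :=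
    (hU.preimage (continuous_const_mul x)).mem_nhds (by simpa using hx)
  obtain ⟨k, -, hk⟩ := he.toHasBasis.mem_iff.1 hU1
  refine ⟨k, fun j hxj y hyj => ?_⟩
  simpa using hk (hPsmall k j x hxj y hyj)

variable [MeasurableSpace G] [BorelSpace G] {A : Subgroup G}

theorem IsCompact.measurableSet_image_mk (hA : IsClosed (A : Set G)) {K : Set G}
    (hK : IsCompact K) : MeasurableSet ((QuotientGroup.mk : G → G ⧸ A) '' K) := by
  refine measurableSet_quotient.2 ?_
  change MeasurableSet (QuotientGroup.mk ⁻¹' (QuotientGroup.mk '' K))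
  rw [QuotientGroup.preimage_image_mk_eq_mul]
  exact (hA.mul_left_of_isCompact hK).measurableSet

theorem exists_measurable_mk_section_closure [SecondCountableTopology G]
    (hA : IsClosed (A : Set G)) {B : Set G} (hB : IsCompact B) :
    ∃ β : G ⧸ A → G, Measurable β ∧
      ∀ q ∈ (QuotientGroup.mk '' B : Set (G ⧸ A)), β q ∈ closure B ∧ (β q : G ⧸ A) = q := by
  obtain ⟨P, hPc, hPcover, hPsmall⟩ := exists_isClosed_covers_small (G := G)
  have hfiber : ∀ q : G ⧸ A, IsClosed (QuotientGroup.mk ⁻¹' {q}) := by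
    intro q
    obtain ⟨g, rfl⟩ := QuotientGroup.mk_surjective q
    rw [← Set.image_singleton, QuotientGroup.preimage_image_mk_eq_mul]
    exact hA.mul_left_of_isCompact isCompact_singleton
  have hhit : ∀ K : Set G, {q : G ⧸ A | (K ∩ QuotientGroup.mk ⁻¹' {q}).Nonempty} =
      QuotientGroup.mk '' K := by
    intro K; ext q; simp [Set.Nonempty]
  obtain ⟨β, hβm, hβ⟩ := exists_measurable_selection hB.closure isClosed_closure P hPc
    (fun k => by simp [hPcover k]) hPsmall hfiber
    (fun K hK _ => by simpa [hhit] using hK.measurableSet_image_mk hA)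
  refine ⟨β, hβm, ?_⟩
  rintro _ ⟨b, hb, rfl⟩
  exact hβ _ ⟨b, subset_closure hb, rfl⟩

end TopologicalGroup

section Weil

variable {G : Type*} [Group G] [TopologicalSpace G] [IsTopologicalGroup G]
  [MeasurableSpace G] [BorelSpace G] {A : Subgroup G} {lam lamA : Measure G}
  {lamQ : Measure (G ⧸ A)} {c : G ⧸ A → Measure G}

theorem fiber_measure_le (hA0 : lamA (A : Set G)ᶜ = 0)
    (hc : ∀ g : G, c g = Measure.map (fun x => g * x) lamA) {E t : Set G}
    (hE : MeasurableSet E) (g : G) (h : ∀ a ∈ A, g * a ∈ E → a ∈ t) : c g E ≤ lamA t := by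
  rw [hc, Measure.map_apply (measurable_const_mul g) hE]
  refine measure_mono_ae (ae_le_set.2 (measure_mono_null ?_ hA0))
  rintro a ⟨haE, hat⟩ haA
  exact hat (h a haA haE)

theorem le_measure_mul_of_weil
    (hc : ∀ g : G, c g = Measure.map (fun x => g * x) lamA)
    (hWeil : ∀ E : Set G, MeasurableSet E → lam E = ∫⁻ q, c q E ∂lamQ) {B : Set G}
    (hQB : MeasurableSet ((QuotientGroup.mk : G → G ⧸ A) '' B)) (F : Set G) :
    lamA F * lamQ (QuotientGroup.mk '' B) ≤ lam (B * F) := by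
  set E := toMeasurable lam (B * F)
  have hE : MeasurableSet E := measurableSet_toMeasurable _ _
  have hfiber : ∀ q, (QuotientGroup.mk '' B).indicator (fun _ => lamA F) q ≤ c q E := by
    intro q
    by_cases hq : q ∈ QuotientGroup.mk '' B
    · rw [Set.indicator_of_mem hq]
      obtain ⟨b, hb, rfl⟩ := hq
      rw [hc, Measure.map_apply (measurable_const_mul b) hE]
      exact measure_mono fun f hf => subset_toMeasurable _ _ (Set.mul_mem_mul hb hf)
    · simp [hq]
  calc lamA F * lamQ (QuotientGroup.mk '' B)
      = ∫⁻ q, (QuotientGroup.mk '' B).indicator (fun _ => lamA F) q ∂lamQ :=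
        (lintegral_indicator_const hQB _).symm
    _ ≤ ∫⁻ q, c q E ∂lamQ := lintegral_mono hfiber
    _ = lam (B * F) := by rw [← hWeil E hE, measure_toMeasurable]

/-- `g` is inseparable from some `b₀ ∈ B`, and neither `A` nor `X` separates inseparable
points. -/
theorem inv_mul_mem_of_mem_closure (hA : IsClosed (A : Set G)) {B F X : Set G}
    (hB : IsCompact B) (hX : MeasurableSet X) (hBFX : (B⁻¹ * B ∩ A) * F ⊆ X) {g b f : G}
    (hg : g ∈ closure B) (hb : b ∈ B) (hf : f ∈ F) (hgb : (g : G ⧸ A) = b) :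
    g⁻¹ * (b * f) ∈ X := by
  obtain ⟨b₀, hb₀, hins⟩ := hB.mem_closure_iff_exists_inseparable.1 hg
  have hb₀b : b₀⁻¹ * b ∈ A :=
    ((hins.inv.mul (Inseparable.refl b)).mem_closed_iff hA).2 (QuotientGroup.eq.1 hgb)
  have hmem : b₀⁻¹ * (b * f) ∈ X := by
    rw [← mul_assoc]
    exact hBFX (Set.mul_mem_mul ⟨Set.mul_mem_mul (Set.inv_mem_inv.2 hb₀) hb, hb₀b⟩ hf)
  exact ((hins.inv.mul (Inseparable.refl (b * f))).mem_measurableSet_iff hX).1 hmem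

theorem measure_mul_le_of_weil [SecondCountableTopology G] (hA : IsClosed (A : Set G))
    (hA0 : lamA (A : Set G)ᶜ = 0)
    (hc : ∀ g : G, c g = Measure.map (fun x => g * x) lamA)
    (hWeil : ∀ E : Set G, MeasurableSet E → lam E = ∫⁻ q, c q E ∂lamQ) {B F : Set G}
    (hB : IsCompact B) (hFA : F ⊆ A) :
    lam (B * F) ≤ lamA ((B⁻¹ * B ∩ A) * F) * lamQ (QuotientGroup.mk '' B) := by
  obtain ⟨β, hβm, hβ⟩ := exists_measurable_mk_section_closure hA hB
  set QB : Set (G ⧸ A) := QuotientGroup.mk '' B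
  have hQB : MeasurableSet QB := hB.measurableSet_image_mk hA
  set X := toMeasurable lamA ((B⁻¹ * B ∩ A) * F)
  have hX : MeasurableSet X := measurableSet_toMeasurable _ _
  set E : Set G := QuotientGroup.mk ⁻¹' QB ∩ {x | (β x)⁻¹ * x ∈ X}
  have hE : MeasurableSet E := (hQB.preimage QuotientGroup.measurable_coe).inter
    (hX.preimage ((hβm.comp QuotientGroup.measurable_coe).inv.mul measurable_id))
  have hBF : B * F ⊆ E := by
    rintro _ ⟨b, hb, f, hf, rfl⟩
    have hbf : ((b * f : G) : G ⧸ A) = b := QuotientGroup.mk_mul_of_mem b (hFA hf)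
    obtain ⟨hβB, hβb⟩ := hβ b ⟨b, hb, rfl⟩
    change ((b * f : G) : G ⧸ A) ∈ QB ∧ (β ((b * f : G) : G ⧸ A))⁻¹ * (b * f) ∈ X
    rw [hbf]
    refine ⟨⟨b, hb, rfl⟩, ?_⟩
    exact inv_mul_mem_of_mem_closure hA hB hX (subset_toMeasurable _ _) hβB hb hf hβb
  have hfiber : ∀ q, c q E ≤ QB.indicator (fun _ => lamA X) q := by
    intro q
    by_cases hq : q ∈ QB
    · obtain ⟨-, hβq⟩ := hβ q hq
      rw [Set.indicator_of_mem hq, ← hβq]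
      refine fiber_measure_le hA0 hc hE _ fun a ha hx => ?_
      have hqa : ((β q * a : G) : G ⧸ A) = q := by rw [QuotientGroup.mk_mul_of_mem _ ha, hβq]
      simpa [hqa] using hx.2
    · obtain ⟨g, rfl⟩ := QuotientGroup.mk_surjective q
      rw [Set.indicator_of_notMem hq, ← measure_empty (μ := lamA)]
      refine fiber_measure_le hA0 hc hE g fun a ha hx => hq ?_
      simpa [QuotientGroup.mk_mul_of_mem _ ha] using hx.1
  calc lam (B * F) ≤ lam E := measure_mono hBF
    _ = ∫⁻ q, c q E ∂lamQ := hWeil E hE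
    _ ≤ ∫⁻ q, QB.indicator (fun _ => lamA X) q ∂lamQ := lintegral_mono hfiber
    _ = lamA ((B⁻¹ * B ∩ A) * F) * lamQ QB := by
      rw [lintegral_indicator_const hQB, measure_toMeasurable]

end Weil

theorem ENNReal.tendsto_div_of_mul_le_of_le_mul {a x : ℕ → ℝ≥0∞} {L : ℝ≥0∞} {δ : ℕ → ℝ}
    (hδ : Tendsto δ atTop (𝓝 0)) (ha0 : ∀ n, a n ≠ 0) (hatop : ∀ n, a n ≠ ∞)
    (hlow : ∀ n, a n * L ≤ x n) (hup : ∀ n, x n ≤ (1 + ENNReal.ofReal (δ n)) * a n * L) :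
    Tendsto (fun n => x n / a n) atTop (𝓝 L) := by
  have hlim : Tendsto (fun n => (1 + ENNReal.ofReal (δ n)) * L) atTop (𝓝 L) := by
    simpa using ENNReal.Tendsto.mul_const
      ((ENNReal.tendsto_ofReal hδ).const_add 1) (Or.inl (by simp)) (b := L)
  refine tendsto_of_tendsto_of_tendsto_of_le_of_le tendsto_const_nhds hlim (fun n => ?_)
    (fun n => ?_)
  · rw [ENNReal.le_div_iff_mul_le (.inl (ha0 n)) (.inl (hatop n)), mul_comm]
    exact hlow n
  · rw [ENNReal.div_le_iff_le_mul (.inl (ha0 n)) (.inl (hatop n)), mul_right_comm]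
    exact hup n

theorem stmt15_general {G : Type*} [Group G] [TopologicalSpace G] [IsTopologicalGroup G]
    [SecondCountableTopology G]
    [MeasurableSpace G] [BorelSpace G]
    (lam : Measure G)
    (A : Subgroup G) (hAclosed : IsClosed (A : Set G))
    (lamA : Measure G)
    (hsupp : ∀ E : Set G, MeasurableSet E → E ∩ (A : Set G) = ∅ → lamA E = 0)
    (lamQ : Measure (G ⧸ A)) (c : G ⧸ A → Measure G)
    (hc : ∀ g : G, c (QuotientGroup.mk g) = Measure.map (fun x => g * x) lamA)
    (hWeil : ∀ E : Set G, MeasurableSet E → lam E = ∫⁻ q, c q E ∂lamQ)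
    (B : Set G) (hB : IsCompact B)
    (F : ℕ → Set G) (hFA : ∀ n, F n ⊆ (A : Set G))
    (hF0 : ∀ n, 0 < lamA (F n)) (hFfin : ∀ n, lamA (F n) < ⊤)
    (ε : ℕ → ℝ) (hε : Tendsto ε atTop (nhds 0))
    (hFolner : ∀ n,
      lamA ((B⁻¹ * B ∩ (A : Set G)) * F n) ≤ (1 + ENNReal.ofReal (ε n)) * lamA (F n)) :
    Tendsto (fun n => lam (B * F n) / lamA (F n)) atTop
      (nhds (lamQ (QuotientGroup.mk '' B))) := by
  have hA0 : lamA (A : Set G)ᶜ = 0 :=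
    hsupp _ hAclosed.measurableSet.compl (Set.compl_inter_self _)
  refine ENNReal.tendsto_div_of_mul_le_of_le_mul hε (fun n => (hF0 n).ne') (fun n => (hFfin n).ne)
    (fun n => le_measure_mul_of_weil hc hWeil (hB.measurableSet_image_mk hAclosed) (F n))
    (fun n => ?_)
  calc lam (B * F n)
      ≤ lamA ((B⁻¹ * B ∩ (A : Set G)) * F n) * lamQ (QuotientGroup.mk '' B) :=
        measure_mul_le_of_weil hAclosed hA0 hc hWeil hB (hFA n)
    _ ≤ (1 + ENNReal.ofReal (ε n)) * lamA (F n) * lamQ (QuotientGroup.mk '' B) := by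
        gcongr
        exact hFolner n

/-- Let `G` be a (locally compact second countable unimodular) group
with Haar measure `lam`, `A` a closed unimodular subgroup with Haar measure `lamA`
(viewed as a measure on `G` supported on `A`), and `lamQ` the invariant measure on
`G/A` with the Weil disintegration `λ(E) = ∫_{G/A} λ_{gA}(E) dλ_Q(gA)`, where
`λ_{gA} = (g·)_* λ_A`.  Let `B ⊆ G` be compact and `(F_n)` symmetric Følner-type subsets
of `A` of positive finite measure which are `((B⁻¹B ∩ A), ε_n)`-invariant, i.e.
`λ_A((B⁻¹B ∩ A)F_n) ≤ (1 + ε_n) λ_A(F_n)`, with `ε_n → 0`.  Then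
`λ(BF_n)/λ_A(F_n) → λ_Q(BA)`. -/
theorem stmt15 {G : Type*} [Group G] [TopologicalSpace G] [IsTopologicalGroup G]
    [SecondCountableTopology G] [LocallyCompactSpace G]
    [MeasurableSpace G] [BorelSpace G]
    (lam : Measure G)
    (hlaml : ∀ g : G, MeasurePreserving (fun x => g * x) lam lam)
    (hlamr : ∀ g : G, MeasurePreserving (fun x => x * g) lam lam)
    (A : Subgroup G) (hAclosed : IsClosed (A : Set G))
    (lamA : Measure G)
    (hsupp : ∀ E : Set G, MeasurableSet E → E ∩ (A : Set G) = ∅ → lamA E = 0)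
    (hlamAl : ∀ a ∈ A, ∀ E : Set G, lamA ((fun x => a * x) ⁻¹' E) = lamA E)
    (hlamAr : ∀ a ∈ A, ∀ E : Set G, lamA ((fun x => x * a) ⁻¹' E) = lamA E)
    (lamQ : Measure (G ⧸ A)) (c : G ⧸ A → Measure G)
    (hc : ∀ g : G, c (QuotientGroup.mk g) = Measure.map (fun x => g * x) lamA)
    (hWeil : ∀ E : Set G, MeasurableSet E → lam E = ∫⁻ q, c q E ∂lamQ)
    (B : Set G) (hB : IsCompact B)
    (F : ℕ → Set G) (hFA : ∀ n, F n ⊆ (A : Set G)) (hFmeas : ∀ n, MeasurableSet (F n))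
    (hFsymm : ∀ n, (F n)⁻¹ = F n)
    (hF0 : ∀ n, 0 < lamA (F n)) (hFfin : ∀ n, lamA (F n) < ⊤)
    (ε : ℕ → ℝ) (hε0 : ∀ n, 0 ≤ ε n) (hε : Tendsto ε atTop (nhds 0))
    (hFolner : ∀ n,
      lamA ((B⁻¹ * B ∩ (A : Set G)) * F n) ≤ (1 + ENNReal.ofReal (ε n)) * lamA (F n)) :
    Tendsto (fun n => lam (B * F n) / lamA (F n)) atTop
      (nhds (lamQ (QuotientGroup.mk '' B))) :=
  stmt15_general lam A hAclosed lamA hsupp lamQ c hc hWeil B hB F hFA hF0 hFfin ε hε hFolner
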